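/- Let b₁, b₂ ∈ C satisfy h(b₁,b₁) = h(b₂,b₂) = 0 and h(b₁,b₂) = πⁿ with n ≥ 1 odd, and set r = (n+1)/2. Then Λ = O_F·π^{−r}b₁ + O_F·π^{−r}b₂ is a vertex lattice of type 2, and for every vertex lattice Λ' (of type 0 or 2) one has: b₁ ∈ Λ' and b₂ ∈ Λ' if and only if D(Λ', Λ) ≤ r; in particular, the set of vertex lattices containing both b₁ and b₂ is the closed ball of radius (n+1)/2 centered at Λ in the Bruhat–Tits tree. -/

import Mathlib

noncomputable section

attribute [local instance] Classical.propDecidable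

variable {F : Type} [Field F]

/-- Membership in the valuation ring `O_F = {x : F | x = 0 ∨ v x ≥ 0}`. -/
def inO (v : F → ℤ) (x : F) : Prop := x = 0 ∨ 0 ≤ v x

/-- The Hermitian form `h(x, y) = x₁ · σ(y₂) + x₂ · σ(y₁)` on `C = F²`. -/
def herm (σ : F →+* F) (x y : F × F) : F := x.1 * σ y.2 + x.2 * σ y.1

/-- The `O_F`-span of two vectors of `C = F²`. -/
def spanL (v : F → ℤ) (u w : F × F) : Set (F × F) :=
  {x | ∃ a b : F, inO v a ∧ inO v b ∧ x = a • u + b • w}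

/-- An `O_F`-lattice in `C`: a free rank-2 `O_F`-submodule spanning `C` over `F`. -/
def IsLattice (v : F → ℤ) (Λ : Set (F × F)) : Prop :=
  ∃ u w : F × F, LinearIndependent F ![u, w] ∧ Λ = spanL v u w

/-- The dual lattice `Λ^♯ = {x ∈ C | h(x, Λ) ⊆ O_F}`. -/
def dualL (σ : F →+* F) (v : F → ℤ) (Λ : Set (F × F)) : Set (F × F) :=
  {x | ∀ y ∈ Λ, inO v (herm σ x y)}

/-- A vertex lattice of type 0: a self-dual lattice. -/
def IsVertex0 (σ : F →+* F) (v : F → ℤ) (Λ : Set (F × F)) : Prop :=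
  IsLattice v Λ ∧ dualL σ v Λ = Λ

/-- A vertex lattice of type 2: a lattice with `Λ^♯ = π Λ`
(equivalently `πΛ ⊆ Λ^♯ ⊆ Λ` with `Λ/Λ^♯` two-dimensional over the residue field). -/
def IsVertex2 (σ : F →+* F) (π : F) (v : F → ℤ) (Λ : Set (F × F)) : Prop :=
  IsLattice v Λ ∧ dualL σ v Λ = (fun x => π • x) '' Λ

/-- A vertex lattice (of type 0 or type 2). -/
def IsVertex (σ : F →+* F) (π : F) (v : F → ℤ) (Λ : Set (F × F)) : Prop :=
  IsVertex0 σ v Λ ∨ IsVertex2 σ π v Λ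

/-- `nIs π b Λ n` says that `n = n(b, Λ)` is the largest integer `m` with `π⁻ᵐ b ∈ Λ`. -/
def nIs (π : F) (b : F × F) (Λ : Set (F × F)) (n : ℤ) : Prop :=
  IsGreatest {m : ℤ | (π ^ (-m)) • b ∈ Λ} n

/-- Adjacency of type-2 vertex lattices: distinct, with intersection a type-0 vertex lattice. -/
def AdjV (σ : F →+* F) (π : F) (v : F → ℤ) (Λ Λ' : Set (F × F)) : Prop :=
  IsVertex2 σ π v Λ ∧ IsVertex2 σ π v Λ' ∧ Λ ≠ Λ' ∧ IsVertex0 σ v (Λ ∩ Λ')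

/-- There is a walk of length `k` between `Λ` and `Λ'` in the Bruhat–Tits tree. -/
def WalkN (σ : F →+* F) (π : F) (v : F → ℤ) (k : ℕ) (Λ Λ' : Set (F × F)) : Prop :=
  ∃ f : ℕ → Set (F × F), f 0 = Λ ∧ f k = Λ' ∧ ∀ i < k, AdjV σ π v (f i) (f (i + 1))

/-- `dGIs σ π v Λ Λ' k` : the graph distance `d_G(Λ, Λ')` equals `k`. -/
def dGIs (σ : F →+* F) (π : F) (v : F → ℤ) (Λ Λ' : Set (F × F)) (k : ℕ) : Prop :=
  IsLeast {j : ℕ | WalkN σ π v j Λ Λ'} k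

/-- `P` is a type-2 "hull" of the vertex lattice `Λ`: `P = Λ` when `Λ` has type 2,
and `P` is a type-2 vertex lattice containing `Λ` when `Λ` has type 0. -/
def HullOf (σ : F →+* F) (π : F) (v : F → ℤ) (Λ P : Set (F × F)) : Prop :=
  (IsVertex2 σ π v Λ ∧ P = Λ) ∨ (IsVertex0 σ v Λ ∧ IsVertex2 σ π v P ∧ Λ ⊆ P)

/-- `DTwice σ π v Λ Λ' m` : twice the tree distance `D(Λ, Λ')` equals `m`
(type-0 vertex lattices are midpoints of edges, contributing `1/2` each). -/
def DTwice (σ : F →+* F) (π : F) (v : F → ℤ) (Λ Λ' : Set (F × F)) (m : ℕ) : Prop :=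
  (Λ = Λ' ∧ m = 0) ∨
  (Λ ≠ Λ' ∧ ∃ k : ℕ,
    IsLeast {j : ℕ | ∃ P Q, HullOf σ π v Λ P ∧ HullOf σ π v Λ' Q ∧ WalkN σ π v j P Q} k ∧
    (m : ℤ) = 2 * k + (if IsVertex0 σ v Λ then 1 else 0) +
      (if IsVertex0 σ v Λ' then 1 else 0))

/-- `g ∈ GL₂(O_F)`. -/
def InGL2O (v : F → ℤ) (g : Matrix (Fin 2) (Fin 2) F) : Prop :=
  (∀ i j, inO v (g i j)) ∧
    ∃ g' : Matrix (Fin 2) (Fin 2) F, (∀ i j, inO v (g' i j)) ∧ g * g' = 1 ∧ g' * g = 1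

/-- Equivalence of Hermitian matrices: `T ≈ T'` iff `gᵗ T ḡ = T'` for some `g ∈ GL₂(O_F)`. -/
def HermEquiv (σ : F →+* F) (v : F → ℤ) (T T' : Matrix (Fin 2) (Fin 2) F) : Prop :=
  ∃ g, InGL2O v g ∧ g.transpose * T * g.map (fun x => σ x) = T'

/-- `u` is a unit of `O_{F₀}`. -/
def IsUnitO₀ (σ : F →+* F) (v : F → ℤ) (u : F) : Prop :=
  σ u = u ∧ u ≠ 0 ∧ v u = 0

/-- `x` is a norm from `F^×`. -/
def IsNorm (σ : F →+* F) (x : F) : Prop := ∃ y : F, y ≠ 0 ∧ x = y * σ y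


/-! ### Auxiliary development -/

namespace Stmt11Aux

section

variable {σ : F →+* F} {π : F} {v : F → ℤ}

/-- Bundle of the ambient hypotheses. -/
structure VCtx (σ : F →+* F) (π : F) (v : F → ℤ) : Prop where
  hinv : ∀ x, σ (σ x) = x
  hσπ : σ π = -π
  hπ : π ≠ 0
  hvπ : v π = 1
  hvσ : ∀ x, v (σ x) = v x
  hvmul : ∀ x y : F, x ≠ 0 → y ≠ 0 → v (x * y) = v x + v y
  hvadd : ∀ x y : F, x ≠ 0 → y ≠ 0 → x + y ≠ 0 → min (v x) (v y) ≤ v (x + y)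
  heven : ∀ x : F, σ x = x → x ≠ 0 → Even (v x)

/-- `x = 0` or `v x ≥ m`. -/
def geV (v : F → ℤ) (x : F) (m : ℤ) : Prop := x = 0 ∨ m ≤ v x

namespace VCtx

variable (H : VCtx σ π v)
include H
set_option linter.unusedSectionVars false

lemma v_one : v 1 = 0 := by
  have h := H.hvmul 1 1 one_ne_zero one_ne_zero
  rw [one_mul] at h; omega

lemma v_neg_one : v (-1 : F) = 0 := by
  have h := H.hvmul (-1) (-1) (by norm_num) (by norm_num)
  have h1 : ((-1 : F) * (-1)) = 1 := by norm_num
  rw [h1, H.v_one] at h; omega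

lemma v_neg (x : F) : v (-x) = v x := by
  by_cases hx : x = 0
  · simp [hx]
  · have h := H.hvmul (-1) x (by norm_num) hx
    rw [neg_one_mul] at h
    rw [h, H.v_neg_one]; omega

lemma v_inv {x : F} (hx : x ≠ 0) : v x⁻¹ = - v x := by
  have h := H.hvmul x x⁻¹ hx (inv_ne_zero hx)
  rw [mul_inv_cancel₀ hx, H.v_one] at h; omega

lemma v_pow {x : F} (hx : x ≠ 0) (k : ℕ) : v (x ^ k) = k * v x := by
  induction k with
  | zero => simpa using H.v_one
  | succ k ih =>
    rw [pow_succ, H.hvmul _ _ (pow_ne_zero k hx) hx, ih]; push_cast; ring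

lemma v_zpow {x : F} (hx : x ≠ 0) (m : ℤ) : v (x ^ m) = m * v x := by
  cases m with
  | ofNat k => rw [Int.ofNat_eq_coe, zpow_natCast, H.v_pow hx]
  | negSucc k =>
    rw [zpow_negSucc, H.v_inv (pow_ne_zero _ hx), H.v_pow hx]
    rw [Int.negSucc_eq]; push_cast; ring

lemma geV_mono {x : F} {m m' : ℤ} (h : geV v x m) (hm : m' ≤ m) : geV v x m' := by
  rcases h with h | h
  · exact Or.inl h
  · exact Or.inr (le_trans hm h)

lemma geV_add {x y : F} {m : ℤ} (hx : geV v x m) (hy : geV v y m) : geV v (x + y) m := by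
  rcases hx with rfl | hx
  · simpa using hy
  rcases hy with rfl | hy
  · rw [add_zero]; exact Or.inr hx
  by_cases hxy : x + y = 0
  · exact Or.inl hxy
  by_cases hx0 : x = 0
  · subst hx0; rw [zero_add]; exact Or.inr hy
  by_cases hy0 : y = 0
  · subst hy0; rw [add_zero]; exact Or.inr hx
  · exact Or.inr (le_trans (le_min hx hy) (H.hvadd x y hx0 hy0 hxy))

lemma geV_mul {x y : F} {m k : ℤ} (hx : geV v x m) (hy : geV v y k) :
    geV v (x * y) (m + k) := by
  rcases hx with rfl | hx
  · exact Or.inl (by simp)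
  rcases hy with rfl | hy
  · exact Or.inl (by simp)
  by_cases hx0 : x = 0
  · exact Or.inl (by simp [hx0])
  by_cases hy0 : y = 0
  · exact Or.inl (by simp [hy0])
  · exact Or.inr (by rw [H.hvmul x y hx0 hy0]; omega)

lemma inO_geV {x : F} : inO v x ↔ geV v x 0 := Iff.rfl

lemma inO_add {x y : F} (hx : inO v x) (hy : inO v y) : inO v (x + y) :=
  H.geV_add hx hy

lemma inO_mul {x y : F} (hx : inO v x) (hy : inO v y) : inO v (x * y) := by
  have := H.geV_mul (m := 0) (k := 0) hx hy
  exact (by simpa using this : geV v (x * y) 0)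

lemma inO_zero : inO v (0 : F) := Or.inl rfl

lemma inO_one : inO v (1 : F) := Or.inr (by rw [H.v_one])

lemma inO_neg {x : F} (hx : inO v x) : inO v (-x) := by
  rcases hx with rfl | hx
  · exact Or.inl (by simp)
  · exact Or.inr (by rw [H.v_neg]; exact hx)

lemma inO_neg_iff {x : F} : inO v (-x) ↔ inO v x :=
  ⟨fun h => by simpa using H.inO_neg h, H.inO_neg⟩

lemma inO_sigma {x : F} (hx : inO v x) : inO v (σ x) := by
  rcases hx with rfl | hx
  · exact Or.inl (by simp)
  · exact Or.inr (by rw [H.hvσ]; exact hx)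

lemma inO_pi : inO v π := Or.inr (by rw [H.hvπ]; omega)

lemma inO_sub {x y : F} (hx : inO v x) (hy : inO v y) : inO v (x - y) := by
  rw [sub_eq_add_neg]; exact H.inO_add hx (H.inO_neg hy)

lemma sigma_ne_zero {x : F} (hx : x ≠ 0) : σ x ≠ 0 :=
  fun h => hx (σ.injective (by rw [h, map_zero]))

end VCtx

/-! ### Pairs, determinants, Cramer -/

section Pairs

variable (H : VCtx σ π v)

/-- Determinant of a pair of vectors. -/
def Dv (u w : F × F) : F := u.1 * w.2 - w.1 * u.2

@[simp] lemma fst_smul' (a : F) (u : F × F) : (a • u).1 = a * u.1 := rfl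
@[simp] lemma snd_smul' (a : F) (u : F × F) : (a • u).2 = a * u.2 := rfl

lemma dep_of_Dv_eq_zero {u w : F × F} (hD : Dv u w = 0) :
    u = 0 ∨ ∃ lam : F, w = lam • u := by
  have hD' : u.1 * w.2 - w.1 * u.2 = 0 := hD
  by_cases h1 : u.1 = 0
  · by_cases h2 : u.2 = 0
    · exact Or.inl (Prod.ext h1 h2)
    · refine Or.inr ⟨w.2 / u.2, Prod.ext ?_ ?_⟩
      · have hw1 : w.1 * u.2 = 0 := by linear_combination w.2 * h1 - hD'
        have hw : w.1 = 0 := by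
          rcases mul_eq_zero.mp hw1 with h | h
          · exact h
          · exact absurd h h2
        simp [hw, h1]
      · simp only [snd_smul']
        field_simp
  · refine Or.inr ⟨w.1 / u.1, Prod.ext ?_ ?_⟩
    · simp only [fst_smul']; field_simp
    · simp only [snd_smul']
      field_simp
      linear_combination hD'

lemma coords_zero {u w : F × F} (hD : Dv u w ≠ 0) {a b : F}
    (h : a • u + b • w = 0) : a = 0 ∧ b = 0 := by
  have h1 : a * u.1 + b * w.1 = 0 := by
    have := congrArg Prod.fst h; simpa using this
  have h2 : a * u.2 + b * w.2 = 0 := by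
    have := congrArg Prod.snd h; simpa using this
  have ha : a * Dv u w = 0 := by unfold Dv; linear_combination w.2 * h1 - w.1 * h2
  have hb : b * Dv u w = 0 := by unfold Dv; linear_combination u.1 * h2 - u.2 * h1
  constructor
  · rcases mul_eq_zero.mp ha with h | h
    · exact h
    · exact absurd h hD
  · rcases mul_eq_zero.mp hb with h | h
    · exact h
    · exact absurd h hD

lemma unique_coords {u w : F × F} (hD : Dv u w ≠ 0) {a b a' b' : F}
    (h : a • u + b • w = a' • u + b' • w) : a = a' ∧ b = b' := by
  have h0 : (a - a') • u + (b - b') • w = 0 := by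
    rw [sub_smul, sub_smul]
    rw [show a • u - a' • u + (b • w - b' • w) = (a • u + b • w) - (a' • u + b' • w) by abel,
      h]; abel
  have := coords_zero hD h0
  exact ⟨sub_eq_zero.mp this.1, sub_eq_zero.mp this.2⟩

lemma cramer {u w : F × F} (hD : Dv u w ≠ 0) (x : F × F) :
    x = ((x.1 * w.2 - w.1 * x.2) / Dv u w) • u + ((u.1 * x.2 - x.1 * u.2) / Dv u w) • w := by
  have hD' : u.1 * w.2 - w.1 * u.2 ≠ 0 := hD
  refine Prod.ext ?_ ?_ <;> (simp only [Dv, Prod.fst_add, Prod.snd_add, Prod.smul_fst, Prod.smul_snd, smul_eq_mul]; rw [div_mul_eq_mul_div, div_mul_eq_mul_div, ← add_div, eq_div_iff hD']; ring)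

lemma li_iff {u w : F × F} : LinearIndependent F ![u, w] ↔ Dv u w ≠ 0 := by
  rw [LinearIndependent.pair_iff]
  constructor
  · intro h hD
    rcases dep_of_Dv_eq_zero hD with rfl | ⟨lam, rfl⟩
    · have := (h 1 0 (by simp)).1; exact one_ne_zero this
    · have := (h lam (-1) (by simp)).2; norm_num at this
  · intro hD s t hst
    exact coords_zero hD hst

end Pairs

/-! ### Hermitian form algebra -/

section Herm

variable (H : VCtx σ π v)

lemma herm_smul_left (a : F) (x y : F × F) : herm σ (a • x) y = a * herm σ x y := by
  simp [herm]; ring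

lemma herm_add_left (x x' y : F × F) : herm σ (x + x') y = herm σ x y + herm σ x' y := by
  simp [herm]; ring

lemma herm_sub_left (x x' y : F × F) : herm σ (x - x') y = herm σ x y - herm σ x' y := by
  simp [herm]; ring

lemma herm_smul_right (a : F) (x y : F × F) : herm σ x (a • y) = σ a * herm σ x y := by
  simp [herm, map_mul]; ring

lemma herm_add_right (x y y' : F × F) : herm σ x (y + y') = herm σ x y + herm σ x y' := by
  simp [herm, map_add]; ring

lemma herm_zero_left (y : F × F) : herm σ 0 y = 0 := by
  simp [herm]

lemma herm_zero_right (x : F × F) : herm σ x 0 = 0 := by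
  simp [herm]

lemma herm_comb_left (a b : F) (u w y : F × F) :
    herm σ (a • u + b • w) y = a * herm σ u y + b * herm σ w y := by
  rw [herm_add_left, herm_smul_left, herm_smul_left]

lemma herm_comb_right (a b : F) (x u w : F × F) :
    herm σ x (a • u + b • w) = σ a * herm σ x u + σ b * herm σ x w := by
  rw [herm_add_right, herm_smul_right, herm_smul_right]

include H in
lemma herm_conj (x y : F × F) : herm σ y x = σ (herm σ x y) := by
  simp [herm, map_add, map_mul, H.hinv]; ring

end Herm

/-! ### Span, closure, duals -/

section SpanDual

variable (H : VCtx σ π v)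

lemma mem_spanL {u w x : F × F} :
    x ∈ spanL v u w ↔ ∃ a b : F, inO v a ∧ inO v b ∧ x = a • u + b • w := Iff.rfl

/-- `S` is closed under the `O_F`-module operations. -/
def ClosedS (v : F → ℤ) (S : Set (F × F)) : Prop :=
  (0 : F × F) ∈ S ∧ (∀ x ∈ S, ∀ y ∈ S, x + y ∈ S) ∧
    (∀ (a : F), ∀ x ∈ S, inO v a → a • x ∈ S)

include H in
lemma closed_spanL (u w : F × F) : ClosedS v (spanL v u w) := by
  refine ⟨⟨0, 0, H.inO_zero, H.inO_zero, by simp⟩, ?_, ?_⟩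
  · rintro x ⟨a, b, ha, hb, rfl⟩ y ⟨c, d, hc, hd, rfl⟩
    exact ⟨a + c, b + d, H.inO_add ha hc, H.inO_add hb hd, by module⟩
  · rintro a x ⟨c, d, hc, hd, rfl⟩ ha
    exact ⟨a * c, a * d, H.inO_mul ha hc, H.inO_mul ha hd, by module⟩

include H in
lemma cl_sub {S : Set (F × F)} (hS : ClosedS v S) {x y : F × F}
    (hx : x ∈ S) (hy : y ∈ S) : x - y ∈ S := by
  have h1 := hS.2.2 (-1) y hy (H.inO_neg H.inO_one)
  have h2 := hS.2.1 x hx _ h1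
  simpa [sub_eq_add_neg] using h2

lemma spanL_subset {S : Set (F × F)} (hS : ClosedS v S) {u w : F × F}
    (hu : u ∈ S) (hw : w ∈ S) : spanL v u w ⊆ S := by
  rintro x ⟨a, b, ha, hb, rfl⟩
  exact hS.2.1 _ (hS.2.2 a u hu ha) _ (hS.2.2 b w hw hb)

lemma gen_mem_spanL_left (H : VCtx σ π v) (u w : F × F) : u ∈ spanL v u w :=
  ⟨1, 0, H.inO_one, H.inO_zero, by simp⟩

lemma gen_mem_spanL_right (H : VCtx σ π v) (u w : F × F) : w ∈ spanL v u w :=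
  ⟨0, 1, H.inO_zero, H.inO_one, by simp⟩

include H in
lemma mem_dual_span {u w x : F × F} :
    x ∈ dualL σ v (spanL v u w) ↔ inO v (herm σ x u) ∧ inO v (herm σ x w) := by
  constructor
  · intro hx
    exact ⟨hx u (gen_mem_spanL_left H u w), hx w (gen_mem_spanL_right H u w)⟩
  · rintro ⟨h1, h2⟩ y ⟨a, b, ha, hb, rfl⟩
    rw [herm_comb_right]
    exact H.inO_add (H.inO_mul (H.inO_sigma ha) h1) (H.inO_mul (H.inO_sigma hb) h2)

/-- First vector of the `herm`-dual basis. -/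
def usV (σ : F →+* F) (u w : F × F) : F × F :=
  (σ w.1 / (-σ (Dv u w)), -σ w.2 / (-σ (Dv u w)))

/-- Second vector of the `herm`-dual basis. -/
def wsV (σ : F →+* F) (u w : F × F) : F × F :=
  (-σ u.1 / (-σ (Dv u w)), σ u.2 / (-σ (Dv u w)))

lemma sigmaD_ne {u w : F × F} (hD : Dv u w ≠ 0) : -σ (Dv u w) ≠ 0 :=
  neg_ne_zero.mpr (fun h => hD (σ.injective (by rw [h, map_zero])))

lemma herm_us_u {u w : F × F} (hD : Dv u w ≠ 0) : herm σ (usV σ u w) u = 1 := by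
  have hσD := sigmaD_ne (σ := σ) hD
  simp only [herm, usV]
  rw [div_mul_eq_mul_div, div_mul_eq_mul_div, ← add_div, div_eq_one_iff_eq hσD,
    Dv, map_sub, map_mul, map_mul]
  ring

lemma herm_us_w {u w : F × F} (hD : Dv u w ≠ 0) : herm σ (usV σ u w) w = 0 := by
  simp only [herm, usV]
  rw [div_mul_eq_mul_div, div_mul_eq_mul_div, ← add_div]
  apply div_eq_zero_iff.mpr
  left; ring

lemma herm_ws_u {u w : F × F} (hD : Dv u w ≠ 0) : herm σ (wsV σ u w) u = 0 := by
  simp only [herm, wsV]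
  rw [div_mul_eq_mul_div, div_mul_eq_mul_div, ← add_div]
  apply div_eq_zero_iff.mpr
  left; ring

lemma herm_ws_w {u w : F × F} (hD : Dv u w ≠ 0) : herm σ (wsV σ u w) w = 1 := by
  have hσD := sigmaD_ne (σ := σ) hD
  simp only [herm, wsV]
  rw [div_mul_eq_mul_div, div_mul_eq_mul_div, ← add_div, div_eq_one_iff_eq hσD,
    Dv, map_sub, map_mul, map_mul]
  ring

lemma herm_eq_zero_all {u w z : F × F} (hD : Dv u w ≠ 0)
    (h1 : herm σ z u = 0) (h2 : herm σ z w = 0) : z = 0 := by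
  have key : ∀ y : F × F, herm σ z y = 0 := by
    intro y
    rw [cramer hD y, herm_comb_right, h1, h2]
    ring
  have e1 := key (0, 1)
  have e2 := key (1, 0)
  simp [herm] at e1 e2
  exact Prod.ext e1 e2

include H in
lemma dual_span_eq {u w : F × F} (hD : Dv u w ≠ 0) :
    dualL σ v (spanL v u w) = spanL v (usV σ u w) (wsV σ u w) := by
  ext x
  rw [mem_dual_span H]
  constructor
  · rintro ⟨h1, h2⟩
    refine ⟨herm σ x u, herm σ x w, h1, h2, ?_⟩
    have hz : x - (herm σ x u • usV σ u w + herm σ x w • wsV σ u w) = 0 := by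
      apply herm_eq_zero_all hD
      · rw [herm_sub_left, herm_comb_left, herm_us_u hD, herm_ws_u hD]; ring
      · rw [herm_sub_left, herm_comb_left, herm_us_w hD, herm_ws_w hD]; ring
    have := sub_eq_zero.mp hz
    exact this
  · rintro ⟨a, b, ha, hb, rfl⟩
    constructor
    · rw [herm_comb_left, herm_us_u hD, herm_ws_u hD]
      simpa using ha
    · rw [herm_comb_left, herm_us_w hD, herm_ws_w hD]
      simpa using hb

lemma Dv_us_ws_ne (H : VCtx σ π v) {u w : F × F} (hD : Dv u w ≠ 0) :
    Dv (usV σ u w) (wsV σ u w) ≠ 0 := by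
  rw [← li_iff, LinearIndependent.pair_iff]
  intro s t hst
  have h1 : herm σ (s • usV σ u w + t • wsV σ u w) u = 0 := by
    rw [hst, herm_zero_left]
  have h2 : herm σ (s • usV σ u w + t • wsV σ u w) w = 0 := by
    rw [hst, herm_zero_left]
  rw [herm_comb_left, herm_us_u hD, herm_ws_u hD] at h1
  rw [herm_comb_left, herm_us_w hD, herm_ws_w hD] at h2
  constructor
  · simpa using h1
  · simpa using h2

include H in
lemma dualdual_span {u w : F × F} (hD : Dv u w ≠ 0) :
    dualL σ v (dualL σ v (spanL v u w)) = spanL v u w := by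
  rw [dual_span_eq H hD]
  ext x
  rw [mem_dual_span H]
  obtain ⟨a, b, hx⟩ : ∃ a b : F, x = a • u + b • w := ⟨_, _, cramer hD x⟩
  have hxu : herm σ x (usV σ u w) = a := by
    rw [hx, herm_comb_left, herm_conj H (usV σ u w) u, herm_conj H (usV σ u w) w,
      herm_us_u hD, herm_us_w hD, map_one, map_zero]
    ring
  have hxw : herm σ x (wsV σ u w) = b := by
    rw [hx, herm_comb_left, herm_conj H (wsV σ u w) u, herm_conj H (wsV σ u w) w,
      herm_ws_u hD, herm_ws_w hD, map_one, map_zero]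
    ring
  rw [hxu, hxw]
  constructor
  · rintro ⟨ha, hb⟩
    exact ⟨a, b, ha, hb, hx⟩
  · rintro ⟨a', b', ha', hb', hx'⟩
    obtain ⟨he1, he2⟩ := unique_coords hD (hx.symm.trans hx')
    exact ⟨by rw [he1]; exact ha', by rw [he2]; exact hb'⟩

include H in
lemma dual_lattice {L : Set (F × F)} (hL : IsLattice v L) :
    IsLattice v (dualL σ v L) := by
  obtain ⟨u, w, hli, rfl⟩ := hL
  have hD := li_iff.mp hli
  exact ⟨_, _, li_iff.mpr (Dv_us_ws_ne H hD), dual_span_eq H hD⟩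

include H in
lemma dualdual_lattice {L : Set (F × F)} (hL : IsLattice v L) :
    dualL σ v (dualL σ v L) = L := by
  obtain ⟨u, w, hli, rfl⟩ := hL
  exact dualdual_span H (li_iff.mp hli)

lemma dual_antitone {A B : Set (F × F)} (h : A ⊆ B) : dualL σ v B ⊆ dualL σ v A :=
  fun _ hx y hy => hx y (h hy)

include H in
lemma closed_dual (S : Set (F × F)) : ClosedS v (dualL σ v S) := by
  refine ⟨fun y _ => by rw [herm_zero_left]; exact H.inO_zero, ?_, ?_⟩
  · intro x hx y hy z hz
    rw [herm_add_left]
    exact H.inO_add (hx z hz) (hy z hz)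
  · intro a x hx ha z hz
    rw [herm_smul_left]
    exact H.inO_mul ha (hx z hz)

include H in
lemma closed_lattice {L : Set (F × F)} (hL : IsLattice v L) : ClosedS v L := by
  obtain ⟨u, w, _, rfl⟩ := hL
  exact closed_spanL H u w

/-! ### Sums of sets, modular law, `π`-images -/

/-- Sum of two subsets. -/
def sSum (A B : Set (F × F)) : Set (F × F) := {x | ∃ a ∈ A, ∃ b ∈ B, x = a + b}

lemma sSum_subset_left {A B : Set (F × F)} (h0 : (0 : F × F) ∈ B) : A ⊆ sSum A B :=
  fun x hx => ⟨x, hx, 0, h0, by simp⟩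

lemma sSum_subset_right {A B : Set (F × F)} (h0 : (0 : F × F) ∈ A) : B ⊆ sSum A B :=
  fun x hx => ⟨0, h0, x, hx, by simp⟩

lemma sSum_subset {A B C : Set (F × F)} (hC : ClosedS v C) (hA : A ⊆ C) (hB : B ⊆ C) :
    sSum A B ⊆ C := by
  rintro x ⟨a, ha, b, hb, rfl⟩
  exact hC.2.1 a (hA ha) b (hB hb)

lemma closed_sSum {A B : Set (F × F)} (hA : ClosedS v A) (hB : ClosedS v B) :
    ClosedS v (sSum A B) := by
  refine ⟨⟨0, hA.1, 0, hB.1, by simp⟩, ?_, ?_⟩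
  · rintro x ⟨a, ha, b, hb, rfl⟩ y ⟨c, hc, d, hd, rfl⟩
    exact ⟨a + c, hA.2.1 a ha c hc, b + d, hB.2.1 b hb d hd, by abel⟩
  · rintro t x ⟨a, ha, b, hb, rfl⟩ ht
    exact ⟨t • a, hA.2.2 t a ha ht, t • b, hB.2.2 t b hb ht, by rw [smul_add]⟩

lemma closed_inter {A B : Set (F × F)} (hA : ClosedS v A) (hB : ClosedS v B) :
    ClosedS v (A ∩ B) := by
  refine ⟨⟨hA.1, hB.1⟩, ?_, ?_⟩
  · rintro x ⟨hx1, hx2⟩ y ⟨hy1, hy2⟩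
    exact ⟨hA.2.1 x hx1 y hy1, hB.2.1 x hx2 y hy2⟩
  · rintro a x ⟨hx1, hx2⟩ ha
    exact ⟨hA.2.2 a x hx1 ha, hB.2.2 a x hx2 ha⟩

include H in
lemma dual_sSum {A B : Set (F × F)} (h0A : (0 : F × F) ∈ A) (h0B : (0 : F × F) ∈ B) :
    dualL σ v (sSum A B) = dualL σ v A ∩ dualL σ v B := by
  ext x
  constructor
  · intro hx
    exact ⟨fun y hy => hx y (sSum_subset_left h0B hy),
           fun y hy => hx y (sSum_subset_right h0A hy)⟩
  · rintro ⟨h1, h2⟩ y ⟨a, ha, b, hb, rfl⟩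
    rw [herm_add_right]
    exact H.inO_add (h1 a ha) (h2 b hb)

include H in
lemma mod_law {A B C : Set (F × F)} (hBC : B ⊆ C) (hC : ClosedS v C) :
    sSum (A ∩ C) B = sSum A B ∩ C := by
  ext x
  constructor
  · rintro ⟨a, ⟨haA, haC⟩, b, hb, rfl⟩
    exact ⟨⟨a, haA, b, hb, rfl⟩, hC.2.1 a haC b (hBC hb)⟩
  · rintro ⟨⟨a, ha, b, hb, rfl⟩, hx⟩
    refine ⟨a, ⟨ha, ?_⟩, b, hb, rfl⟩
    have := cl_sub H hC hx (hBC hb)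
    simpa using this

lemma image_pi_smul_span (u w : F × F) :
    (fun x => π • x) '' spanL v u w = spanL v (π • u) (π • w) := by
  ext x
  constructor
  · rintro ⟨y, ⟨a, b, ha, hb, rfl⟩, rfl⟩
    exact ⟨a, b, ha, hb, by module⟩
  · rintro ⟨a, b, ha, hb, rfl⟩
    exact ⟨a • u + b • w, ⟨a, b, ha, hb, rfl⟩, by module⟩

lemma pi_smul_injective (hπ : π ≠ 0) : Function.Injective (fun x : F × F => π • x) := by
  intro x y h
  have := congrArg (fun z : F × F => π⁻¹ • z) h
  simpa [smul_smul, inv_mul_cancel₀ hπ] using this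

lemma image_pi_subset_iff (hπ : π ≠ 0) {A B : Set (F × F)} :
    (fun x => π • x) '' A ⊆ (fun x => π • x) '' B ↔ A ⊆ B := by
  constructor
  · intro h x hx
    obtain ⟨y, hy, hxy⟩ := h ⟨x, hx, rfl⟩
    rwa [← pi_smul_injective hπ hxy]
  · intro h
    exact Set.image_mono h

include H in
lemma closed_image_pi {S : Set (F × F)} (hS : ClosedS v S) :
    ClosedS v ((fun x => π • x) '' S) := by
  refine ⟨⟨0, hS.1, by simp⟩, ?_, ?_⟩
  · rintro x ⟨x', hx', rfl⟩ y ⟨y', hy', rfl⟩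
    exact ⟨x' + y', hS.2.1 _ hx' _ hy', by simp [smul_add]⟩
  · rintro a x ⟨x', hx', rfl⟩ ha
    exact ⟨a • x', hS.2.2 a x' hx' ha, smul_comm π a x'⟩

lemma image_pi_sSum (A B : Set (F × F)) :
    (fun x => π • x) '' sSum A B = sSum ((fun x => π • x) '' A) ((fun x => π • x) '' B) := by
  ext x
  constructor
  · rintro ⟨y, ⟨a, ha, b, hb, rfl⟩, rfl⟩
    exact ⟨π • a, ⟨a, ha, rfl⟩, π • b, ⟨b, hb, rfl⟩, by simp [smul_add]⟩
  · rintro ⟨a', ⟨a, ha, rfl⟩, b', ⟨b, hb, rfl⟩, rfl⟩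
    exact ⟨a + b, ⟨a, ha, b, hb, rfl⟩, by simp [smul_add]⟩

include H in
lemma dual_image_pi {P : Set (F × F)} (h2 : dualL σ v P = (fun x => π • x) '' P) :
    dualL σ v ((fun x => π • x) '' P) = P := by
  ext x
  constructor
  · intro hx
    have hmem : π • x ∈ dualL σ v P := by
      intro y hy
      have h := hx (π • y) ⟨y, hy, rfl⟩
      rw [herm_smul_right, H.hσπ, neg_mul] at h
      rw [herm_smul_left]
      exact H.inO_neg_iff.mp h
    rw [h2] at hmem
    obtain ⟨y, hy, hxy⟩ := hmem
    rwa [← pi_smul_injective H.hπ hxy]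
  · rintro hx z ⟨y, hy, rfl⟩
    rw [herm_smul_right, H.hσπ, neg_mul]
    apply H.inO_neg_iff.mpr
    have hmem : π • x ∈ dualL σ v P := by
      rw [h2]; exact ⟨x, hx, rfl⟩
    have := hmem y hy
    rwa [herm_smul_left] at this

end SpanDual

/-! ### Coordinates relative to a fixed basis, squeeze lemma -/

section Coords

variable (H : VCtx σ π v) (e₁ e₂ : F × F)

/-- First coordinate w.r.t. the basis `e₁, e₂`. -/
def C1 (x : F × F) : F := (x.1 * e₂.2 - e₂.1 * x.2) / Dv e₁ e₂

/-- Second coordinate w.r.t. the basis `e₁, e₂`. -/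
def C2 (x : F × F) : F := (e₁.1 * x.2 - x.1 * e₁.2) / Dv e₁ e₂

variable {e₁ e₂}

lemma C1_add (x y : F × F) : C1 e₁ e₂ (x + y) = C1 e₁ e₂ x + C1 e₁ e₂ y := by
  simp [C1]; ring

lemma C2_add (x y : F × F) : C2 e₁ e₂ (x + y) = C2 e₁ e₂ x + C2 e₁ e₂ y := by
  simp [C2]; ring

lemma C1_smul (a : F) (x : F × F) : C1 e₁ e₂ (a • x) = a * C1 e₁ e₂ x := by
  simp [C1]; ring

lemma C2_smul (a : F) (x : F × F) : C2 e₁ e₂ (a • x) = a * C2 e₁ e₂ x := by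
  simp [C2]; ring

lemma C1_sub (x y : F × F) : C1 e₁ e₂ (x - y) = C1 e₁ e₂ x - C1 e₁ e₂ y := by
  simp [C1]; ring

lemma C1_zero : C1 e₁ e₂ (0 : F × F) = 0 := by simp [C1]

lemma C2_zero : C2 e₁ e₂ (0 : F × F) = 0 := by simp [C2]

lemma C1_e₁ (hD : Dv e₁ e₂ ≠ 0) : C1 e₁ e₂ e₁ = 1 := by
  unfold C1
  rw [show e₁.1 * e₂.2 - e₂.1 * e₁.2 = Dv e₁ e₂ from rfl, div_self hD]

lemma C1_e₂ (hD : Dv e₁ e₂ ≠ 0) : C1 e₁ e₂ e₂ = 0 := by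
  unfold C1
  apply div_eq_zero_iff.mpr
  left; ring

lemma C2_e₁ (hD : Dv e₁ e₂ ≠ 0) : C2 e₁ e₂ e₁ = 0 := by
  unfold C2
  apply div_eq_zero_iff.mpr
  left; ring

lemma C2_e₂ (hD : Dv e₁ e₂ ≠ 0) : C2 e₁ e₂ e₂ = 1 := by
  unfold C2
  rw [show e₁.1 * e₂.2 - e₂.1 * e₁.2 = Dv e₁ e₂ from rfl]
  exact div_self hD

lemma decomp (hD : Dv e₁ e₂ ≠ 0) (x : F × F) :
    x = C1 e₁ e₂ x • e₁ + C2 e₁ e₂ x • e₂ := by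
  unfold C1 C2
  exact cramer hD x

include H in
lemma lattice_of_squeeze (hD : Dv e₁ e₂ ≠ 0) {S : Set (F × F)} (hS : ClosedS v S)
    (j i : ℤ)
    (hub : ∀ x ∈ S, geV v (C1 e₁ e₂ x) j ∧ geV v (C2 e₁ e₂ x) j)
    (h1 : (π ^ i) • e₁ ∈ S) (h2 : (π ^ i) • e₂ ∈ S) : IsLattice v S := by
  have hπi : (π : F) ^ i ≠ 0 := zpow_ne_zero i H.hπ
  have hbdd1 : ∀ z : ℤ, (∃ x ∈ S, C1 e₁ e₂ x ≠ 0 ∧ v (C1 e₁ e₂ x) = z) → j ≤ z := by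
    rintro z ⟨x, hxS, hxne, rfl⟩
    rcases (hub x hxS).1 with h | h
    · exact absurd h hxne
    · exact h
  have hC1pi : C1 e₁ e₂ ((π ^ i) • e₁) = π ^ i := by
    rw [C1_smul, C1_e₁ hD, mul_one]
  have hinh1 : ∃ z : ℤ, ∃ x ∈ S, C1 e₁ e₂ x ≠ 0 ∧ v (C1 e₁ e₂ x) = z :=
    ⟨v (π ^ i), π ^ i • e₁, h1, by rw [hC1pi]; exact hπi, by rw [hC1pi]⟩
  obtain ⟨z₁, ⟨x₁, hx₁S, hx₁ne, hx₁v⟩, hmin₁⟩ := Int.exists_least_of_bdd ⟨j, hbdd1⟩ hinh1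
  have hbdd2 : ∀ z : ℤ,
      (∃ x ∈ S, C1 e₁ e₂ x = 0 ∧ C2 e₁ e₂ x ≠ 0 ∧ v (C2 e₁ e₂ x) = z) → j ≤ z := by
    rintro z ⟨x, hxS, _, hxne, rfl⟩
    rcases (hub x hxS).2 with h | h
    · exact absurd h hxne
    · exact h
  have hC1pi2 : C1 e₁ e₂ ((π ^ i) • e₂) = 0 := by rw [C1_smul, C1_e₂ hD, mul_zero]
  have hC2pi2 : C2 e₁ e₂ ((π ^ i) • e₂) = π ^ i := by rw [C2_smul, C2_e₂ hD, mul_one]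
  have hinh2 : ∃ z : ℤ, ∃ x ∈ S, C1 e₁ e₂ x = 0 ∧ C2 e₁ e₂ x ≠ 0 ∧ v (C2 e₁ e₂ x) = z :=
    ⟨v (π ^ i), π ^ i • e₂, h2, hC1pi2, by rw [hC2pi2]; exact hπi, by rw [hC2pi2]⟩
  obtain ⟨z₂, ⟨x₂, hx₂S, hx₂C1, hx₂ne, hx₂v⟩, hmin₂⟩ := Int.exists_least_of_bdd ⟨j, hbdd2⟩ hinh2
  have hx₂eq : x₂ = C2 e₁ e₂ x₂ • e₂ := by
    have h := decomp hD x₂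
    rw [hx₂C1, zero_smul, zero_add] at h
    exact h
  have key2 : ∀ x ∈ S, C1 e₁ e₂ x = 0 → ∃ b : F, inO v b ∧ x = b • x₂ := by
    intro x hxS hC1
    by_cases hC2 : C2 e₁ e₂ x = 0
    · refine ⟨0, H.inO_zero, ?_⟩
      rw [zero_smul]
      have h := decomp hD x
      rw [hC1, hC2, zero_smul, zero_smul, add_zero] at h
      exact h
    · refine ⟨C2 e₁ e₂ x / C2 e₁ e₂ x₂, ?_, ?_⟩
      · right
        rw [div_eq_mul_inv, H.hvmul _ _ hC2 (inv_ne_zero hx₂ne), H.v_inv hx₂ne, hx₂v]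
        have := hmin₂ (v (C2 e₁ e₂ x)) ⟨x, hxS, hC1, hC2, rfl⟩
        omega
      · have hx : x = C2 e₁ e₂ x • e₂ := by
          have h := decomp hD x
          rw [hC1, zero_smul, zero_add] at h
          exact h
        have h1 : (C2 e₁ e₂ x / C2 e₁ e₂ x₂) • (C2 e₁ e₂ x₂ • e₂) = C2 e₁ e₂ x • e₂ := by
          rw [smul_smul, div_mul_cancel₀ _ hx₂ne]
        have h2 : x = (C2 e₁ e₂ x / C2 e₁ e₂ x₂) • (C2 e₁ e₂ x₂ • e₂) := by
          rw [h1]; exact hx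
        rw [← hx₂eq] at h2
        exact h2
  have hSeq : S = spanL v x₁ x₂ := by
    ext x
    constructor
    · intro hxS
      by_cases hC1 : C1 e₁ e₂ x = 0
      · obtain ⟨b, hb, hxb⟩ := key2 x hxS hC1
        exact ⟨0, b, H.inO_zero, hb, by rw [zero_smul, zero_add]; exact hxb⟩
      · have ha : inO v (C1 e₁ e₂ x / C1 e₁ e₂ x₁) := by
          right
          rw [div_eq_mul_inv, H.hvmul _ _ hC1 (inv_ne_zero hx₁ne), H.v_inv hx₁ne, hx₁v]
          have := hmin₁ (v (C1 e₁ e₂ x)) ⟨x, hxS, hC1, rfl⟩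
          omega
        set a := C1 e₁ e₂ x / C1 e₁ e₂ x₁ with ha_def
        have hy : x - a • x₁ ∈ S := cl_sub H hS hxS (hS.2.2 a x₁ hx₁S ha)
        have hyC1 : C1 e₁ e₂ (x - a • x₁) = 0 := by
          rw [C1_sub, C1_smul, ha_def, div_mul_cancel₀ _ hx₁ne, sub_self]
        obtain ⟨b, hb, hxb⟩ := key2 _ hy hyC1
        refine ⟨a, b, ha, hb, ?_⟩
        exact sub_eq_iff_eq_add'.mp hxb
    · rintro ⟨a, b, ha, hb, rfl⟩
      exact hS.2.1 _ (hS.2.2 a x₁ hx₁S ha) _ (hS.2.2 b x₂ hx₂S hb)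
  have hli : LinearIndependent F ![x₁, x₂] := by
    rw [LinearIndependent.pair_iff]
    intro s t hst
    have h1 : C1 e₁ e₂ (s • x₁ + t • x₂) = 0 := by rw [hst, C1_zero]
    rw [C1_add, C1_smul, C1_smul, hx₂C1, mul_zero, add_zero] at h1
    have hs : s = 0 := by
      rcases mul_eq_zero.mp h1 with h | h
      · exact h
      · exact absurd h hx₁ne
    subst hs
    rw [zero_smul, zero_add] at hst
    have hx₂0 : x₂ ≠ 0 := fun h => hx₂ne (by rw [h, C2_zero])
    rcases smul_eq_zero.mp hst with h | h
    · exact ⟨rfl, h⟩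
    · exact absurd h hx₂0
  exact ⟨x₁, x₂, hli, hSeq⟩

end Coords

/-! ### Basis change, integrality, exclusion of type-1 lattices -/

section Exclusion

variable (H : VCtx σ π v)

lemma span_comm (u w : F × F) : spanL v u w = spanL v w u := by
  ext x
  constructor
  · rintro ⟨a, b, ha, hb, rfl⟩
    exact ⟨b, a, hb, ha, add_comm _ _⟩
  · rintro ⟨a, b, ha, hb, rfl⟩
    exact ⟨b, a, hb, ha, add_comm _ _⟩

include H in
lemma span_change {u w : F × F} {a b : F} (ha : inO v a) (hb : inO v b)
    (ha0 : a ≠ 0) (hva : v a = 0) : spanL v (a • u + b • w) w = spanL v u w := by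
  ext x
  constructor
  · rintro ⟨c, d, hc, hd, rfl⟩
    refine ⟨c * a, c * b + d, H.inO_mul hc ha, H.inO_add (H.inO_mul hc hb) hd, by module⟩
  · rintro ⟨c, d, hc, hd, rfl⟩
    have hia : inO v a⁻¹ := Or.inr (by rw [H.v_inv ha0, hva]; omega)
    refine ⟨c * a⁻¹, d - c * a⁻¹ * b, H.inO_mul hc hia,
      H.inO_sub hd (H.inO_mul (H.inO_mul hc hia) hb), ?_⟩
    have hca : c * a⁻¹ * a = c := by field_simp
    have key : (c * a⁻¹) • (a • u + b • w) + (d - c * a⁻¹ * b) • w = c • u + d • w := by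
      rw [smul_add, smul_smul, smul_smul, hca, sub_smul]
      abel
    rw [key]

include H in
lemma span_sub_dual {s t : F × F} (hD : Dv s t ≠ 0)
    (hs : s ∈ dualL σ v (spanL v s t)) (ht : π • t ∈ dualL σ v (spanL v s t)) :
    spanL v s t ⊆ dualL σ v (spanL v s t) := by
  obtain ⟨hss, hst⟩ := (mem_dual_span H).mp hs
  obtain ⟨-, htt'⟩ := (mem_dual_span H).mp ht
  rw [herm_smul_left] at htt'
  have hts : inO v (herm σ t s) := by
    rw [herm_conj H]
    exact H.inO_sigma hst
  have htt : inO v (herm σ t t) := by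
    by_cases h0 : herm σ t t = 0
    · exact Or.inl h0
    right
    have hne : π * herm σ t t ≠ 0 := mul_ne_zero H.hπ h0
    have hv1 : 0 ≤ v (π * herm σ t t) := by
      rcases htt' with h | h
      · exact absurd h hne
      · exact h
    rw [H.hvmul _ _ H.hπ h0, H.hvπ] at hv1
    have hev : Even (v (herm σ t t)) := H.heven _ (herm_conj H t t).symm h0
    obtain ⟨c, hc⟩ := hev
    omega
  rintro x ⟨a, b, ha, hb, rfl⟩ y ⟨c, d, hc, hd, rfl⟩
  rw [herm_comb_left, herm_comb_right, herm_comb_right]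
  apply H.inO_add
  · exact H.inO_mul ha
      (H.inO_add (H.inO_mul (H.inO_sigma hc) hss) (H.inO_mul (H.inO_sigma hd) hst))
  · exact H.inO_mul hb
      (H.inO_add (H.inO_mul (H.inO_sigma hc) hts) (H.inO_mul (H.inO_sigma hd) htt))

include H in
lemma exclusion {L : Set (F × F)} (hL : IsLattice v L)
    (hsub : dualL σ v L ⊆ L) (hsup : (fun x => π • x) '' L ⊆ dualL σ v L) :
    dualL σ v L = L ∨ dualL σ v L = (fun x => π • x) '' L := by
  obtain ⟨u, w, hli, rfl⟩ := hL
  have hD := li_iff.mp hli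
  by_cases hc : dualL σ v (spanL v u w) ⊆ (fun x => π • x) '' spanL v u w
  · exact Or.inr (Set.Subset.antisymm hc hsup)
  left
  obtain ⟨s, hsdual, hsnot⟩ := Set.not_subset.mp hc
  obtain ⟨a, b, ha, hb, hseq⟩ := hsub hsdual
  have hmem_iff : s ∈ spanL v (π • u) (π • w) ↔ geV v a 1 ∧ geV v b 1 := by
    constructor
    · rintro ⟨c, d, hc', hd', hseq'⟩
      have h' : a • u + b • w = (c * π) • u + (d * π) • w := by
        rw [← hseq, hseq']
        module
      obtain ⟨hA, hB⟩ := unique_coords hD h'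
      have hπ1 : geV v π 1 := Or.inr (by rw [H.hvπ])
      constructor
      · rw [hA]
        simpa using H.geV_mul hc' hπ1
      · rw [hB]
        simpa using H.geV_mul hd' hπ1
    · rintro ⟨hA, hB⟩
      have hdiv : ∀ t : F, geV v t 1 → inO v (t / π) := by
        intro t htg
        by_cases ht0 : t = 0
        · exact Or.inl (by rw [ht0, zero_div])
        · right
          rw [div_eq_mul_inv, H.hvmul _ _ ht0 (inv_ne_zero H.hπ), H.v_inv H.hπ, H.hvπ]
          rcases htg with h | h
          · exact absurd h ht0
          · omega
      refine ⟨a / π, b / π, hdiv a hA, hdiv b hB, ?_⟩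
      rw [hseq, smul_smul, smul_smul, div_mul_cancel₀ a H.hπ, div_mul_cancel₀ b H.hπ]
  have himg : (fun x => π • x) '' spanL v u w = spanL v (π • u) (π • w) :=
    image_pi_smul_span u w
  rw [himg, hmem_iff] at hsnot
  have hcases : (a ≠ 0 ∧ v a = 0) ∨ (b ≠ 0 ∧ v b = 0) := by
    by_cases hA : geV v a 1
    · right
      have hBn : ¬ geV v b 1 := fun h => hsnot ⟨hA, h⟩
      have hb0 : b ≠ 0 := fun h => hBn (Or.inl h)
      refine ⟨hb0, ?_⟩
      have hnb : ¬ (1 ≤ v b) := fun h => hBn (Or.inr h)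
      rcases hb with h | h
      · exact absurd h hb0
      · push_neg at hnb
        omega
    · left
      have ha0 : a ≠ 0 := fun h => hA (Or.inl h)
      have hna : ¬ (1 ≤ v a) := fun h => hA (Or.inr h)
      rcases ha with h | h
      · exact absurd h ha0
      · push_neg at hna
        exact ⟨ha0, by omega⟩
  have main : spanL v u w ⊆ dualL σ v (spanL v u w) := by
    rcases hcases with ⟨ha0, hva⟩ | ⟨hb0, hvb⟩
    · have hch : spanL v s w = spanL v u w := by
        rw [hseq]
        exact span_change H ha hb ha0 hva
      have hDsw : Dv s w ≠ 0 := by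
        have heq : Dv s w = a * Dv u w := by
          rw [hseq]
          simp only [Dv, Prod.fst_add, Prod.snd_add, fst_smul', snd_smul']
          ring
        rw [heq]
        exact mul_ne_zero ha0 hD
      have hs' : s ∈ dualL σ v (spanL v s w) := by rw [hch]; exact hsdual
      have ht' : π • w ∈ dualL σ v (spanL v s w) := by
        rw [hch]
        exact hsup ⟨w, gen_mem_spanL_right H u w, rfl⟩
      have hres := span_sub_dual H hDsw hs' ht'
      rw [hch] at hres
      exact hres
    · have hDwu : Dv w u ≠ 0 := by
        have hwu : Dv w u = -Dv u w := by unfold Dv; ring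
        rw [hwu]
        exact neg_ne_zero.mpr hD
      have hseq' : s = b • w + a • u := by rw [hseq]; abel
      have hch : spanL v s u = spanL v u w := by
        rw [hseq', span_change H hb ha hb0 hvb]
        exact span_comm w u
      have hDsu : Dv s u ≠ 0 := by
        have heq : Dv s u = b * Dv w u := by
          rw [hseq']
          simp only [Dv, Prod.fst_add, Prod.snd_add, fst_smul', snd_smul']
          ring
        rw [heq]
        exact mul_ne_zero hb0 hDwu
      have hs' : s ∈ dualL σ v (spanL v s u) := by rw [hch]; exact hsdual
      have ht' : π • u ∈ dualL σ v (spanL v s u) := by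
        rw [hch]
        exact hsup ⟨u, gen_mem_spanL_left H u w, rfl⟩
      have hres := span_sub_dual H hDsu hs' ht'
      rw [hch] at hres
      exact hres
  exact Set.Subset.antisymm hsub main

include H in
lemma not_both {L : Set (F × F)} (h0 : IsVertex0 σ v L) (h2 : IsVertex2 σ π v L) : False := by
  obtain ⟨⟨u, w, hli, rfl⟩, hd0⟩ := h0
  have hD := li_iff.mp hli
  have heq : spanL v u w = (fun x => π • x) '' spanL v u w := hd0.symm.trans h2.2
  have hu : u ∈ spanL v (π • u) (π • w) := by
    rw [← image_pi_smul_span, ← heq]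
    exact gen_mem_spanL_left H u w
  obtain ⟨c, d, hc, hd, hu'⟩ := hu
  have h1 : (1 : F) • u + (0 : F) • w = (c * π) • u + (d * π) • w := by
    calc (1 : F) • u + (0 : F) • w = u := by module
    _ = c • π • u + d • π • w := hu'
    _ = (c * π) • u + (d * π) • w := by module
  obtain ⟨hA, -⟩ := unique_coords hD h1
  have hc0 : c ≠ 0 := by
    intro h
    rw [h, zero_mul] at hA
    exact one_ne_zero hA
  have hv : v c + 1 = 0 := by
    have hm := H.hvmul c π hc0 H.hπ
    rw [← hA, H.v_one, H.hvπ] at hm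
    omega
  rcases hc with h | h
  · exact hc0 h
  · omega

end Exclusion

/-! ### The standard chain of lattices and the Bruhat–Tits tree walks -/

/-- Gram data for a normalized hyperbolic basis. -/
structure GCtx (σ : F →+* F) (v : F → ℤ) (e₁ e₂ : F × F) (g : F) : Prop where
  hD : Dv e₁ e₂ ≠ 0
  hg : herm σ e₁ e₂ = g
  hg0 : g ≠ 0
  hvg : v g = -1
  h11 : herm σ e₁ e₁ = 0
  h22 : herm σ e₂ e₂ = 0

/-- The chain of lattices `π^j Λ`. -/
def Lm (π : F) (v : F → ℤ) (e₁ e₂ : F × F) (j : ℤ) : Set (F × F) :=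
  spanL v ((π ^ j) • e₁) ((π ^ j) • e₂)

section Chain

set_option linter.unusedSectionVars false

variable (H : VCtx σ π v) {e₁ e₂ : F × F} {g : F} (G : GCtx σ v e₁ e₂ g)

include H in
lemma inO_div_geV {t : F} {j : ℤ} (ht : geV v t j) : inO v (t / π ^ j) := by
  by_cases ht0 : t = 0
  · exact Or.inl (by rw [ht0, zero_div])
  · right
    have hπj : (π : F) ^ j ≠ 0 := zpow_ne_zero j H.hπ
    rw [div_eq_mul_inv, H.hvmul _ _ ht0 (inv_ne_zero hπj), H.v_inv hπj, H.v_zpow H.hπ, H.hvπ]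
    rcases ht with h | h
    · exact absurd h ht0
    · omega

lemma Lm_congr {a b : ℤ} (h : a = b) : Lm π v e₁ e₂ a = Lm π v e₁ e₂ b := by rw [h]

include H G in
lemma Dv_pow (j : ℤ) : Dv ((π ^ j) • e₁) ((π ^ j) • e₂) ≠ 0 := by
  have heq : Dv ((π ^ j) • e₁) ((π ^ j) • e₂) = π ^ j * π ^ j * Dv e₁ e₂ := by
    simp only [Dv, fst_smul', snd_smul']; ring
  rw [heq]
  exact mul_ne_zero (mul_ne_zero (zpow_ne_zero j H.hπ) (zpow_ne_zero j H.hπ)) G.hD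

include H G in
lemma mem_Lm (j : ℤ) (x : F × F) :
    x ∈ Lm π v e₁ e₂ j ↔ geV v (C1 e₁ e₂ x) j ∧ geV v (C2 e₁ e₂ x) j := by
  have hD := G.hD
  have hπj : (π : F) ^ j ≠ 0 := zpow_ne_zero j H.hπ
  have hvj : v ((π : F) ^ j) = j := by rw [H.v_zpow H.hπ, H.hvπ, mul_one]
  constructor
  · rintro ⟨a, b, ha, hb, rfl⟩
    have hc1 : C1 e₁ e₂ (a • (π ^ j) • e₁ + b • (π ^ j) • e₂) = a * π ^ j := by
      rw [C1_add, C1_smul, C1_smul, C1_smul, C1_smul, C1_e₁ hD, C1_e₂ hD]; ring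
    have hc2 : C2 e₁ e₂ (a • (π ^ j) • e₁ + b • (π ^ j) • e₂) = b * π ^ j := by
      rw [C2_add, C2_smul, C2_smul, C2_smul, C2_smul, C2_e₁ hD, C2_e₂ hD]; ring
    rw [hc1, hc2]
    have hgp : geV v ((π : F) ^ j) j := Or.inr (le_of_eq hvj.symm)
    exact ⟨by simpa using H.geV_mul ha hgp, by simpa using H.geV_mul hb hgp⟩
  · rintro ⟨hc1, hc2⟩
    refine ⟨C1 e₁ e₂ x / π ^ j, C2 e₁ e₂ x / π ^ j, inO_div_geV H hc1, inO_div_geV H hc2, ?_⟩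
    rw [smul_smul, smul_smul, div_mul_cancel₀ _ hπj, div_mul_cancel₀ _ hπj]
    exact decomp hD x

include H G in
lemma Lm_mono {j j' : ℤ} (h : j' ≤ j) : Lm π v e₁ e₂ j ⊆ Lm π v e₁ e₂ j' := by
  intro x hx
  rw [mem_Lm H G] at hx ⊢
  exact ⟨H.geV_mono hx.1 h, H.geV_mono hx.2 h⟩

include H G in
lemma Lm_le {j j' : ℤ} (h : Lm π v e₁ e₂ j ⊆ Lm π v e₁ e₂ j') : j' ≤ j := by
  have hmem : (π ^ j) • e₁ ∈ Lm π v e₁ e₂ j := gen_mem_spanL_left H _ _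
  obtain ⟨h1, -⟩ := (mem_Lm H G j' _).mp (h hmem)
  rw [C1_smul, C1_e₁ G.hD, mul_one] at h1
  rcases h1 with h1 | h1
  · exact absurd h1 (zpow_ne_zero j H.hπ)
  · rw [H.v_zpow H.hπ, H.hvπ, mul_one] at h1
    exact h1

include H G in
lemma lattice_Lm (j : ℤ) : IsLattice v (Lm π v e₁ e₂ j) :=
  ⟨_, _, li_iff.mpr (Dv_pow H G j), rfl⟩

include H in
lemma closed_Lm (j : ℤ) : ClosedS v (Lm π v e₁ e₂ j) := closed_spanL H _ _

include H in
lemma image_Lm (j : ℤ) :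
    (fun x => π • x) '' Lm π v e₁ e₂ j = Lm π v e₁ e₂ (j + 1) := by
  have h1 : π • ((π : F) ^ j • e₁) = ((π : F) ^ (j + 1)) • e₁ := by
    rw [smul_smul, zpow_add_one₀ H.hπ, mul_comm]
  have h2 : π • ((π : F) ^ j • e₂) = ((π : F) ^ (j + 1)) • e₂ := by
    rw [smul_smul, zpow_add_one₀ H.hπ, mul_comm]
  rw [show Lm π v e₁ e₂ j = spanL v ((π ^ j) • e₁) ((π ^ j) • e₂) from rfl,
    image_pi_smul_span, h1, h2]
  rfl

include H G in
lemma lattice_between {S : Set (F × F)} (hS : ClosedS v S) {a b : ℤ}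
    (hlow : Lm π v e₁ e₂ a ⊆ S) (hup : S ⊆ Lm π v e₁ e₂ b) : IsLattice v S := by
  apply lattice_of_squeeze H G.hD hS b a
  · intro x hx
    exact (mem_Lm H G b x).mp (hup hx)
  · exact hlow (gen_mem_spanL_left H _ _)
  · exact hlow (gen_mem_spanL_right H _ _)

include H G in
lemma herm_coord1 (x : F × F) : herm σ x e₁ = C2 e₁ e₂ x * σ g := by
  conv_lhs => rw [decomp G.hD x]
  rw [herm_comb_left, G.h11, herm_conj H e₁ e₂, G.hg]
  ring

include H G in
lemma herm_coord2 (x : F × F) : herm σ x e₂ = C1 e₁ e₂ x * g := by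
  conv_lhs => rw [decomp G.hD x]
  rw [herm_comb_left, G.h22, G.hg]
  ring

include H in
lemma inO_scale_iff {t s : F} (hs0 : s ≠ 0) (hvs : v s = -1) (j : ℤ) :
    inO v (σ (π ^ j) * (t * s)) ↔ geV v t (1 - j) := by
  by_cases ht : t = 0
  · constructor
    · intro _; exact Or.inl ht
    · intro _; exact Or.inl (by rw [ht]; ring)
  · have hσj : σ ((π : F) ^ j) ≠ 0 := H.sigma_ne_zero (zpow_ne_zero j H.hπ)
    have hvσj : v (σ ((π : F) ^ j)) = j := by rw [H.hvσ, H.v_zpow H.hπ, H.hvπ, mul_one]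
    have hts : t * s ≠ 0 := mul_ne_zero ht hs0
    have hne : σ ((π : F) ^ j) * (t * s) ≠ 0 := mul_ne_zero hσj hts
    have hv : v (σ ((π : F) ^ j) * (t * s)) = j + (v t + -1) := by
      rw [H.hvmul _ _ hσj hts, H.hvmul _ _ ht hs0, hvσj, hvs]
    constructor
    · rintro (h | h)
      · exact absurd h hne
      · right; omega
    · rintro (h | h)
      · exact absurd h ht
      · right; omega

include H G in
lemma dual_Lm (j : ℤ) :
    dualL σ v (Lm π v e₁ e₂ j) = Lm π v e₁ e₂ (1 - j) := by
  have hσg0 : σ g ≠ 0 := H.sigma_ne_zero G.hg0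
  have hvσg : v (σ g) = -1 := by rw [H.hvσ, G.hvg]
  ext x
  rw [show Lm π v e₁ e₂ j = spanL v ((π ^ j) • e₁) ((π ^ j) • e₂) from rfl,
    mem_dual_span H, mem_Lm H G]
  have h1 : herm σ x ((π ^ j) • e₁) = σ (π ^ j) * (C2 e₁ e₂ x * σ g) := by
    rw [herm_smul_right, herm_coord1 H G]
  have h2 : herm σ x ((π ^ j) • e₂) = σ (π ^ j) * (C1 e₁ e₂ x * g) := by
    rw [herm_smul_right, herm_coord2 H G]
  rw [h1, h2, inO_scale_iff H hσg0 hvσg j, inO_scale_iff H G.hg0 G.hvg j]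
  exact and_comm

include H G in
lemma vertex2_Lm0 : IsVertex2 σ π v (Lm π v e₁ e₂ 0) := by
  refine ⟨lattice_Lm H G 0, ?_⟩
  rw [dual_Lm H G 0, image_Lm H 0, Lm_congr (show (1 : ℤ) - 0 = 0 + 1 by ring)]

include H G in
lemma not_vertex0_Lm0 : ¬ IsVertex0 σ v (Lm π v e₁ e₂ 0) :=
  fun h0 => not_both H h0 (vertex2_Lm0 H G)

end Chain

/-! ### Walk helpers -/

section Walks

set_option linter.unusedSectionVars false

variable (H : VCtx σ π v)

lemma walk_refl (P : Set (F × F)) : WalkN σ π v 0 P P :=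
  ⟨fun _ => P, rfl, rfl, fun i hi => absurd hi (Nat.not_lt_zero i)⟩

lemma walk_prepend {k : ℕ} {P P' Q : Set (F × F)} (hadj : AdjV σ π v P P')
    (hw : WalkN σ π v k P' Q) : WalkN σ π v (k + 1) P Q := by
  obtain ⟨f, hf0, hfk, hfadj⟩ := hw
  refine ⟨fun i => Nat.casesOn i P (fun j => f j), rfl, hfk, ?_⟩
  intro i hi
  cases i with
  | zero =>
    show AdjV σ π v P (f 0)
    rw [hf0]
    exact hadj
  | succ j => exact hfadj j (by omega)

include H in
lemma adj_pi_sub {A B : Set (F × F)} (hadj : AdjV σ π v A B) {y : F × F} (hy : y ∈ B) :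
    π • y ∈ A := by
  obtain ⟨hA2, hB2, hne, h0⟩ := hadj
  have h1 : π • y ∈ dualL σ v B := by
    rw [hB2.2]
    exact ⟨y, hy, rfl⟩
  have h2 : dualL σ v B ⊆ dualL σ v (A ∩ B) :=
    dual_antitone Set.inter_subset_right
  have h3 := h0.2
  exact (h3 ▸ h2 h1).1

include H in
lemma walk_pow_sub : ∀ (k : ℕ) (P Q : Set (F × F)), WalkN σ π v k P Q →
    ∀ x ∈ Q, (π ^ k) • x ∈ P := by
  intro k
  induction k with
  | zero =>
    rintro P Q ⟨f, hf0, hfk, -⟩ x hx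
    rw [pow_zero, one_smul]
    have hPQ : P = Q := hf0.symm.trans hfk
    rw [hPQ]
    exact hx
  | succ k ih =>
    rintro P Q ⟨f, hf0, hfk, hadj⟩ x hx
    have hw' : WalkN σ π v k (f 1) Q :=
      ⟨fun i => f (i + 1), rfl, hfk, fun i hi => hadj (i + 1) (by omega)⟩
    have hmem := ih (f 1) Q hw' x hx
    have hadj0 : AdjV σ π v (f 0) (f 1) := hadj 0 (by omega)
    have hres := adj_pi_sub H hadj0 hmem
    rw [pow_succ', mul_smul, ← hf0]
    exact hres

end Walks

/-! ### The geodesic step and distance bounds -/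

section Step

set_option linter.unusedSectionVars false

variable (H : VCtx σ π v) {e₁ e₂ : F × F} {g : F} (G : GCtx σ v e₁ e₂ g)

include H G in
lemma step_lemma (m : ℕ) (P : Set (F × F)) (hP : IsVertex2 σ π v P)
    (hPl : Lm π v e₁ e₂ ((m : ℤ) + 1) ⊆ P) (hPu : P ⊆ Lm π v e₁ e₂ (-(m : ℤ) - 1))
    (hnot : ¬ (Lm π v e₁ e₂ (m : ℤ) ⊆ P ∧ P ⊆ Lm π v e₁ e₂ (-(m : ℤ)))) :
    ∃ P', IsVertex2 σ π v P' ∧ AdjV σ π v P P' ∧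
      Lm π v e₁ e₂ (m : ℤ) ⊆ P' ∧ P' ⊆ Lm π v e₁ e₂ (-(m : ℤ)) := by
  set m' : ℤ := (m : ℤ) with hm'
  have hm0 : 0 ≤ m' := Int.natCast_nonneg m
  have hPlat : IsLattice v P := hP.1
  have hPc : ClosedS v P := closed_lattice H hPlat
  have hLc : ∀ j : ℤ, ClosedS v (Lm π v e₁ e₂ j) := fun j => closed_Lm H j
  have hL00 : ∀ j : ℤ, (0 : F × F) ∈ Lm π v e₁ e₂ j := fun j => (hLc j).1
  -- X := P + Lm m'
  set X := sSum P (Lm π v e₁ e₂ m') with hX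
  have hXc : ClosedS v X := closed_sSum hPc (hLc m')
  have hLmX : Lm π v e₁ e₂ m' ⊆ X := sSum_subset_right hPc.1
  have hPX : P ⊆ X := sSum_subset_left (hL00 m')
  have hXup : X ⊆ Lm π v e₁ e₂ (-m' - 1) :=
    sSum_subset (hLc _) hPu (Lm_mono H G (by omega))
  have hXlat : IsLattice v X := lattice_between H G hXc hLmX hXup
  set P' := X ∩ Lm π v e₁ e₂ (-m') with hP'
  have hP'c : ClosedS v P' := closed_inter hXc (hLc _)
  have hLmP' : Lm π v e₁ e₂ m' ⊆ P' := fun x hx => ⟨hLmX hx, Lm_mono H G (by omega) hx⟩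
  have hP'up : P' ⊆ Lm π v e₁ e₂ (-m') := Set.inter_subset_right
  have hP'lat : IsLattice v P' := lattice_between H G hP'c hLmP' hP'up
  -- dual of X
  have hdualX : dualL σ v X = ((fun x => π • x) '' P) ∩ Lm π v e₁ e₂ (1 - m') := by
    rw [hX, dual_sSum H hPc.1 (hL00 _), hP.2, dual_Lm H G]
  -- L0 := dual X + Lm (m' + 1)
  set L0 := sSum (dualL σ v X) (Lm π v e₁ e₂ (m' + 1)) with hL0'
  have hdualXc : ClosedS v (dualL σ v X) := closed_dual H X
  have hL0c : ClosedS v L0 := closed_sSum hdualXc (hLc _)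
  have hL0low : Lm π v e₁ e₂ (m' + 1) ⊆ L0 := sSum_subset_right hdualXc.1
  have hL0up : L0 ⊆ Lm π v e₁ e₂ (1 - m') := by
    apply sSum_subset (hLc _)
    · rw [hdualX]; exact Set.inter_subset_right
    · exact Lm_mono H G (by omega)
  have hL0lat : IsLattice v L0 := lattice_between H G hL0c hL0low hL0up
  -- dual L0 = P'
  have hdL0 : dualL σ v L0 = P' := by
    rw [hL0', dual_sSum H hdualXc.1 (hL00 _), dualdual_lattice H hXlat, dual_Lm H G,
      Lm_congr (show (1 : ℤ) - (m' + 1) = -m' by ring)]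
  -- dual P' = L0
  have hdP' : dualL σ v P' = L0 := by
    rw [← hdL0, dualdual_lattice H hL0lat]
  -- π '' P ⊆ Lm (-m')
  have hπP_ub : (fun x => π • x) '' P ⊆ Lm π v e₁ e₂ (-m') := by
    have himg := Set.image_mono (f := fun x : F × F => π • x) hPu
    rw [image_Lm H, Lm_congr (show -m' - 1 + 1 = -m' by ring)] at himg
    exact himg
  -- π '' P' = L0
  have himgP' : (fun x => π • x) '' P' = L0 := by
    have hstep : (fun x => π • x) '' P' =
        sSum ((fun x => π • x) '' P) (Lm π v e₁ e₂ (m' + 1)) ∩ Lm π v e₁ e₂ (1 - m') := by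
      rw [hP', Set.image_inter (pi_smul_injective H.hπ), hX, image_pi_sSum, image_Lm H,
        image_Lm H, Lm_congr (show -m' + 1 = 1 - m' by ring)]
    rw [hstep, hL0', hdualX, mod_law H (Lm_mono H G (by omega)) (hLc _)]
  have hP'2 : IsVertex2 σ π v P' := ⟨hP'lat, by rw [hdP', ← himgP']⟩
  -- P ≠ P'
  have hPne : P ≠ P' := by
    intro h
    apply hnot
    constructor
    · rw [h]; exact hLmP'
    · rw [h]; exact hP'up
  -- inclusion facts
  have hπP_P : (fun x => π • x) '' P ⊆ P := by
    rintro x ⟨y, hy, rfl⟩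
    exact hPc.2.2 π y hy H.inO_pi
  have hπP_P' : (fun x => π • x) '' P ⊆ P' := fun x hx => ⟨hPX (hπP_P hx), hπP_ub hx⟩
  have hπP'_P' : (fun x => π • x) '' P' ⊆ P' := by
    rintro x ⟨y, hy, rfl⟩
    exact hP'c.2.2 π y hy H.inO_pi
  have hπP'_P : (fun x => π • x) '' P' ⊆ P := by
    rintro x ⟨y, ⟨hyX, hyC⟩, rfl⟩
    rw [hX] at hyX
    obtain ⟨p, hp, l, hl, rfl⟩ := hyX
    show π • (p + l) ∈ P
    rw [smul_add]
    apply hPc.2.1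
    · exact hπP_P ⟨p, hp, rfl⟩
    · apply hPl
      have hmem : π • l ∈ (fun x => π • x) '' Lm π v e₁ e₂ m' := ⟨l, hl, rfl⟩
      rw [image_Lm H] at hmem
      exact hmem
  -- N := π''P + π''P'
  set N := sSum ((fun x => π • x) '' P) ((fun x => π • x) '' P') with hN
  have h0πP : (0 : F × F) ∈ (fun x => π • x) '' P := ⟨0, hPc.1, by simp⟩
  have h0πP' : (0 : F × F) ∈ (fun x => π • x) '' P' := ⟨0, hP'c.1, by simp⟩
  have hMc : ClosedS v (P ∩ P') := closed_inter hPc hP'c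
  have hNM : N ⊆ P ∩ P' :=
    sSum_subset hMc (fun x hx => ⟨hπP_P hx, hπP_P' hx⟩)
      (fun x hx => ⟨hπP'_P hx, hπP'_P' hx⟩)
  have hdN : dualL σ v N = P ∩ P' := by
    rw [hN, dual_sSum H h0πP h0πP', dual_image_pi H hP.2, dual_image_pi H hP'2.2]
  have hMlat : IsLattice v (P ∩ P') := by
    apply lattice_between H G hMc (a := m' + 1) (b := -m' - 1)
    · intro x hx
      exact ⟨hPl hx, hLmP' (Lm_mono H G (by omega) hx)⟩
    · exact fun x hx => hPu hx.1
  have hNlat : IsLattice v N := by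
    apply lattice_between H G (closed_sSum (closed_image_pi H hPc) (closed_image_pi H hP'c))
      (a := m' + 2) (b := -m')
    · intro x hx
      apply sSum_subset_left h0πP'
      have himg := Set.image_mono (f := fun x : F × F => π • x) hPl
      rw [image_Lm H, Lm_congr (show m' + 1 + 1 = m' + 2 by ring)] at himg
      exact himg hx
    · apply sSum_subset (hLc _) hπP_ub
      exact fun x hx => hP'up (hπP'_P' hx)
  have hdM : dualL σ v (P ∩ P') = N := by
    rw [← hdN, dualdual_lattice H hNlat]
  have hMP : dualL σ v (P ∩ P') ⊆ P ∩ P' := by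
    rw [hdM]; exact hNM
  have hπM_N : (fun x => π • x) '' (P ∩ P') ⊆ dualL σ v (P ∩ P') := by
    rw [hdM]
    rintro x ⟨y, hy, rfl⟩
    exact sSum_subset_left h0πP' ⟨y, hy.1, rfl⟩
  rcases exclusion H hMlat hMP hπM_N with h0 | h2
  · exact ⟨P', hP'2, ⟨hP, hP'2, hPne, ⟨hMlat, h0⟩⟩, hLmP', hP'up⟩
  · exfalso
    have hNeq : N = (fun x => π • x) '' (P ∩ P') := hdM.symm.trans h2
    have hPP' : P ⊆ P' := by
      apply (image_pi_subset_iff H.hπ).mp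
      intro x hx
      have hxN : x ∈ N := sSum_subset_left h0πP' hx
      rw [hNeq] at hxN
      obtain ⟨y, hy, rfl⟩ := hxN
      exact ⟨y, hy.2, rfl⟩
    have hP'P : P' ⊆ P := by
      apply (image_pi_subset_iff H.hπ).mp
      intro x hx
      have hxN : x ∈ N := sSum_subset_right h0πP hx
      rw [hNeq] at hxN
      obtain ⟨y, hy, rfl⟩ := hxN
      exact ⟨y, hy.1, rfl⟩
    exact hPne (Set.Subset.antisymm hPP' hP'P)

include H G in
lemma walk_to_center : ∀ (m : ℕ) (P : Set (F × F)), IsVertex2 σ π v P →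
    Lm π v e₁ e₂ (m : ℤ) ⊆ P → P ⊆ Lm π v e₁ e₂ (-(m : ℤ)) →
    ∃ k ≤ m, WalkN σ π v k P (Lm π v e₁ e₂ 0) := by
  intro m
  induction m with
  | zero =>
    intro P _ hl hu
    have hPeq : P = Lm π v e₁ e₂ 0 := by
      apply Set.Subset.antisymm
      · exact fun x hx => hu hx
      · exact fun x hx => hl hx
    refine ⟨0, le_refl 0, ?_⟩
    rw [hPeq]
    exact walk_refl _
  | succ m ih =>
    intro P hP hl hu
    by_cases hcase : Lm π v e₁ e₂ (m : ℤ) ⊆ P ∧ P ⊆ Lm π v e₁ e₂ (-(m : ℤ))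
    · obtain ⟨k, hk, hw⟩ := ih P hP hcase.1 hcase.2
      exact ⟨k, by omega, hw⟩
    · have hidx1 : Lm π v e₁ e₂ (((m + 1 : ℕ) : ℤ)) = Lm π v e₁ e₂ ((m : ℤ) + 1) :=
        Lm_congr (by push_cast; ring)
      have hidx2 : Lm π v e₁ e₂ (-((m + 1 : ℕ) : ℤ)) = Lm π v e₁ e₂ (-(m : ℤ) - 1) :=
        Lm_congr (by push_cast; ring)
      rw [hidx1] at hl
      rw [hidx2] at hu
      obtain ⟨P', hP'2, hadj, hlP', huP'⟩ := step_lemma H G m P hP hl hu hcase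
      obtain ⟨k, hk, hw⟩ := ih P' hP'2 hlP' huP'
      exact ⟨k + 1, by omega, walk_prepend hadj hw⟩

include H G in
lemma hull_step (m : ℕ) (M : Set (F × F)) (hM0 : IsVertex0 σ v M)
    (hl : Lm π v e₁ e₂ ((m : ℤ) + 1) ⊆ M) :
    (∃ P k, IsVertex2 σ π v P ∧ M ⊆ P ∧ k ≤ m ∧ WalkN σ π v k P (Lm π v e₁ e₂ 0))
    ∨ (0 < m ∧ IsVertex0 σ v (sSum M (Lm π v e₁ e₂ (m : ℤ)))
        ∧ Lm π v e₁ e₂ (m : ℤ) ⊆ sSum M (Lm π v e₁ e₂ (m : ℤ))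
        ∧ M ⊆ sSum M (Lm π v e₁ e₂ (m : ℤ))) := by
  have hMlat := hM0.1
  have hMc : ClosedS v M := closed_lattice H hMlat
  set m' : ℤ := (m : ℤ) with hm'
  have hm0 : 0 ≤ m' := Int.natCast_nonneg m
  have hMu : M ⊆ Lm π v e₁ e₂ (-m') := by
    have h1 := dual_antitone (σ := σ) (v := v) hl
    rw [dual_Lm H G, hM0.2, Lm_congr (show (1 : ℤ) - (m' + 1) = -m' by ring)] at h1
    exact h1
  set M₁ := sSum M (Lm π v e₁ e₂ m') with hM₁
  have hM₁c : ClosedS v M₁ := closed_sSum hMc (closed_Lm H m')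
  have hMM₁ : M ⊆ M₁ := sSum_subset_left (closed_Lm H m').1
  have hLmM₁ : Lm π v e₁ e₂ m' ⊆ M₁ := sSum_subset_right hMc.1
  have hM₁u : M₁ ⊆ Lm π v e₁ e₂ (-m') :=
    sSum_subset (closed_Lm H _) hMu (Lm_mono H G (by omega))
  have hM₁lat : IsLattice v M₁ := lattice_between H G hM₁c hLmM₁ hM₁u
  have hdM₁ : dualL σ v M₁ = M ∩ Lm π v e₁ e₂ (1 - m') := by
    rw [hM₁, dual_sSum H hMc.1 (closed_Lm H m').1, hM0.2, dual_Lm H G]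
  have hsub : dualL σ v M₁ ⊆ M₁ := by
    rw [hdM₁]
    exact fun x hx => hMM₁ hx.1
  have hsup : (fun x => π • x) '' M₁ ⊆ dualL σ v M₁ := by
    rw [hdM₁]
    rintro x ⟨y, hy, rfl⟩
    constructor
    · rw [hM₁] at hy
      obtain ⟨p, hp, l, hlm, rfl⟩ := hy
      show π • (p + l) ∈ M
      rw [smul_add]
      apply hMc.2.1
      · exact hMc.2.2 π p hp H.inO_pi
      · apply hl
        have hmem : π • l ∈ (fun x => π • x) '' Lm π v e₁ e₂ m' := ⟨l, hlm, rfl⟩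
        rwa [image_Lm H] at hmem
    · have hmem : π • y ∈ (fun x => π • x) '' Lm π v e₁ e₂ (-m') := ⟨y, hM₁u hy, rfl⟩
      rw [image_Lm H, Lm_congr (show -m' + 1 = 1 - m' by ring)] at hmem
      exact hmem
  rcases exclusion H hM₁lat hsub hsup with h0 | h2
  · by_cases hm : 0 < m
    · right
      exact ⟨hm, ⟨hM₁lat, h0⟩, hLmM₁, hMM₁⟩
    · exfalso
      have hmz : m' = 0 := by omega
      rw [hmz] at hLmM₁
      have hM₁L : M₁ ⊆ Lm π v e₁ e₂ (1 - 0) := by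
        have h1 := dual_antitone (σ := σ) (v := v) hLmM₁
        rw [dual_Lm H G, h0] at h1
        exact h1
      have hle : (1 : ℤ) - 0 ≤ 0 := Lm_le H G (fun x hx => hM₁L (hLmM₁ hx))
      omega
  · left
    have hM₁2 : IsVertex2 σ π v M₁ := ⟨hM₁lat, h2⟩
    obtain ⟨k, hk, hw⟩ := walk_to_center H G m M₁ hM₁2 hLmM₁ hM₁u
    exact ⟨M₁, k, hM₁2, hMM₁, hk, hw⟩

include H G in
lemma hull_walk : ∀ (m : ℕ) (M : Set (F × F)), IsVertex0 σ v M →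
    Lm π v e₁ e₂ ((m : ℤ) + 1) ⊆ M →
    ∃ P k, IsVertex2 σ π v P ∧ M ⊆ P ∧ k ≤ m ∧ WalkN σ π v k P (Lm π v e₁ e₂ 0) := by
  intro m
  induction m with
  | zero =>
    intro M hM0 hl
    rcases hull_step H G 0 M hM0 hl with h | h
    · exact h
    · exact absurd h.1 (by omega)
  | succ m ih =>
    intro M hM0 hl
    rcases hull_step H G (m + 1) M hM0 hl with h | ⟨-, h0, hlm, hMM₁⟩
    · obtain ⟨P, k, hP2, hMP, hk, hw⟩ := h
      exact ⟨P, k, hP2, hMP, hk, hw⟩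
    · have hidx : Lm π v e₁ e₂ ((m : ℤ) + 1) = Lm π v e₁ e₂ (((m + 1 : ℕ) : ℤ)) :=
        Lm_congr (by push_cast; ring)
      have hl' : Lm π v e₁ e₂ ((m : ℤ) + 1) ⊆
          sSum M (Lm π v e₁ e₂ (((m + 1 : ℕ) : ℤ))) := by
        rw [hidx]
        exact hlm
      obtain ⟨P, k, hP2, hMP, hk, hw⟩ := ih _ h0 hl'
      exact ⟨P, k, hP2, fun x hx => hMP (hMM₁ hx), by omega, hw⟩

end Step





end

end Stmt11Aux

open Stmt11Aux in
theorem statement11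
    (σ : F →+* F) (π : F) (v : F → ℤ)
    (hinv : ∀ x, σ (σ x) = x)
    (hσπ : σ π = -π)
    (hπ : π ≠ 0)
    (h2 : (2 : F) ≠ 0)
    (hvπ : v π = 1)
    (hv2 : v (2 : F) = 0)
    (hvσ : ∀ x, v (σ x) = v x)
    (hvmul : ∀ x y : F, x ≠ 0 → y ≠ 0 → v (x * y) = v x + v y)
    (hvadd : ∀ x y : F, x ≠ 0 → y ≠ 0 → x + y ≠ 0 → min (v x) (v y) ≤ v (x + y))
    (heven : ∀ x : F, σ x = x → x ≠ 0 → Even (v x))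
    (b₁ b₂ : F × F)
    (h11 : herm σ b₁ b₁ = 0) (h22 : herm σ b₂ b₂ = 0)
    (n : ℕ) (hn : 1 ≤ n) (hodd : Odd n) (h12 : herm σ b₁ b₂ = π ^ n)
    (r : ℕ) (hr : n + 1 = 2 * r) :
    IsVertex2 σ π v (spanL v ((π ^ (-(r : ℤ))) • b₁) ((π ^ (-(r : ℤ))) • b₂)) ∧
    ∀ Λ' : Set (F × F), IsVertex σ π v Λ' →
      ((b₁ ∈ Λ' ∧ b₂ ∈ Λ') ↔
        ∃ m : ℕ,
          DTwice σ π v Λ' (spanL v ((π ^ (-(r : ℤ))) • b₁) ((π ^ (-(r : ℤ))) • b₂)) m ∧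
          m ≤ 2 * r) := by
  classical
  have H : VCtx σ π v := ⟨hinv, hσπ, hπ, hvπ, hvσ, hvmul, hvadd, heven⟩
  set c : F := π ^ (-(r : ℤ)) with hc
  set e₁ : F × F := c • b₁ with he₁
  set e₂ : F × F := c • b₂ with he₂
  have hrn : (n : ℤ) + 1 = 2 * (r : ℤ) := by exact_mod_cast hr
  have hr1 : 1 ≤ r := by omega
  have hc0 : c ≠ 0 := zpow_ne_zero _ hπ
  have hσc0 : σ c ≠ 0 := H.sigma_ne_zero hc0
  have hπn : (π : F) ^ n ≠ 0 := pow_ne_zero n hπ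
  set g : F := c * σ c * π ^ n with hgdef
  have hg0 : g ≠ 0 := mul_ne_zero (mul_ne_zero hc0 hσc0) hπn
  have hvc : v c = -(r : ℤ) := by rw [hc, H.v_zpow hπ, hvπ, mul_one]
  have hvg : v g = -1 := by
    rw [hgdef, H.hvmul _ _ (mul_ne_zero hc0 hσc0) hπn, H.hvmul _ _ hc0 hσc0, H.hvσ, hvc,
      H.v_pow hπ, hvπ]
    omega
  have hgram : herm σ e₁ e₂ = g := by
    rw [he₁, he₂, herm_smul_left, herm_smul_right, h12, hgdef]
    ring
  have h11' : herm σ e₁ e₁ = 0 := by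
    rw [he₁, herm_smul_left, herm_smul_right, h11, mul_zero, mul_zero]
  have h22' : herm σ e₂ e₂ = 0 := by
    rw [he₂, herm_smul_left, herm_smul_right, h22, mul_zero, mul_zero]
  have hD : Dv e₁ e₂ ≠ 0 := by
    intro hD0
    rcases dep_of_Dv_eq_zero hD0 with h | ⟨lam, hlam⟩
    · rw [h, herm_zero_left] at hgram
      exact hg0 hgram.symm
    · rw [hlam, herm_smul_right, h11', mul_zero] at hgram
      exact hg0 hgram.symm
  have G : GCtx σ v e₁ e₂ g := ⟨hD, hgram, hg0, hvg, h11', h22'⟩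
  have hLm0 : Lm π v e₁ e₂ 0 = spanL v e₁ e₂ := by
    unfold Lm
    rw [zpow_zero, one_smul, one_smul]
  have vertex2Λ : IsVertex2 σ π v (spanL v e₁ e₂) := by
    rw [← hLm0]
    exact vertex2_Lm0 H G
  have not0Λ : ¬ IsVertex0 σ v (spanL v e₁ e₂) := by
    rw [← hLm0]
    exact not_vertex0_Lm0 H G
  have hπr : (π : F) ^ (r : ℤ) * c = 1 := by
    rw [hc, ← zpow_add₀ hπ]
    norm_num
  have hb₁ : ((π : F) ^ (r : ℤ)) • e₁ = b₁ := by
    rw [he₁, smul_smul, hπr, one_smul]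
  have hb₂ : ((π : F) ^ (r : ℤ)) • e₂ = b₂ := by
    rw [he₂, smul_smul, hπr, one_smul]
  have hLmr : Lm π v e₁ e₂ (r : ℤ) = spanL v b₁ b₂ := by
    unfold Lm
    rw [hb₁, hb₂]
  -- key fact for the backward direction:
  have hbP : ∀ (kk : ℕ) (P : Set (F × F)), (kk : ℤ) ≤ (r : ℤ) →
      (∀ x ∈ spanL v e₁ e₂, (π ^ kk) • x ∈ P) → b₁ ∈ P ∧ b₂ ∈ P := by
    intro kk P hkk hP
    have hinO : inO v ((π : F) ^ ((r : ℤ) - (kk : ℤ))) :=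
      Or.inr (by rw [H.v_zpow hπ, hvπ, mul_one]; omega)
    have hmem1 : ((π : F) ^ ((r : ℤ) - kk)) • e₁ ∈ spanL v e₁ e₂ :=
      ⟨_, 0, hinO, H.inO_zero, by rw [zero_smul, add_zero]⟩
    have hmem2 : ((π : F) ^ ((r : ℤ) - kk)) • e₂ ∈ spanL v e₁ e₂ :=
      ⟨0, _, H.inO_zero, hinO, by rw [zero_smul, zero_add]⟩
    have hpow : (π : F) ^ kk * (π : F) ^ ((r : ℤ) - kk) = (π : F) ^ (r : ℤ) := by
      rw [← zpow_natCast π kk, ← zpow_add₀ hπ]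
      congr 1
      ring
    have hsm1 : (π : F) ^ kk • ((π : F) ^ ((r : ℤ) - kk)) • e₁ = b₁ := by
      rw [smul_smul, hpow, hb₁]
    have hsm2 : (π : F) ^ kk • ((π : F) ^ ((r : ℤ) - kk)) • e₂ = b₂ := by
      rw [smul_smul, hpow, hb₂]
    constructor
    · rw [← hsm1]; exact hP _ hmem1
    · rw [← hsm2]; exact hP _ hmem2
  refine ⟨vertex2Λ, ?_⟩
  intro Λ' hΛ'
  constructor
  · -- forward
    rintro ⟨hb1, hb2⟩
    by_cases hEq : Λ' = spanL v e₁ e₂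
    · exact ⟨0, Or.inl ⟨hEq, rfl⟩, by omega⟩
    · have hΛ'lat : IsLattice v Λ' := by
        rcases hΛ' with h | h
        · exact h.1
        · exact h.1
      have hΛ'c : ClosedS v Λ' := closed_lattice H hΛ'lat
      have hsubr : Lm π v e₁ e₂ (r : ℤ) ⊆ Λ' := by
        rw [hLmr]
        exact spanL_subset hΛ'c hb1 hb2
      rcases hΛ' with h0 | h2
      · -- Λ' of type 0
        have hidx : ((r - 1 : ℕ) : ℤ) + 1 = (r : ℤ) := by omega
        have hl : Lm π v e₁ e₂ (((r - 1 : ℕ) : ℤ) + 1) ⊆ Λ' := by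
          rw [Lm_congr hidx]
          exact hsubr
        obtain ⟨P, k, hP2, hΛ'P, hk, hw⟩ := hull_walk H G (r - 1) Λ' h0 hl
        rw [hLm0] at hw
        have hkS : k ∈ {j : ℕ | ∃ Pa Q, HullOf σ π v Λ' Pa ∧
            HullOf σ π v (spanL v e₁ e₂) Q ∧ WalkN σ π v j Pa Q} :=
          ⟨P, spanL v e₁ e₂, Or.inr ⟨h0, hP2, hΛ'P⟩, Or.inl ⟨vertex2Λ, rfl⟩, hw⟩
        have hne : {j : ℕ | ∃ Pa Q, HullOf σ π v Λ' Pa ∧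
            HullOf σ π v (spanL v e₁ e₂) Q ∧ WalkN σ π v j Pa Q}.Nonempty := ⟨k, hkS⟩
        refine ⟨2 * Nat.find hne + 1, Or.inr ⟨hEq, Nat.find hne,
          ⟨Nat.find_spec hne, fun j hj => Nat.find_min' hne hj⟩, ?_⟩, ?_⟩
        · rw [if_pos h0, if_neg not0Λ]
          push_cast; ring
        · have hle : Nat.find hne ≤ k := Nat.find_min' hne hkS
          omega
      · -- Λ' of type 2
        have hup : Λ' ⊆ Lm π v e₁ e₂ (-(r : ℤ)) := by
          have h1 := dual_antitone (σ := σ) (v := v) hsubr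
          rw [dual_Lm H G, h2.2] at h1
          have h3 : (fun x => π • x) '' Λ' ⊆
              (fun x => π • x) '' Lm π v e₁ e₂ (-(r : ℤ)) := by
            rw [image_Lm H, Lm_congr (show -(r : ℤ) + 1 = 1 - (r : ℤ) by ring)]
            exact h1
          exact (image_pi_subset_iff hπ).mp h3
        obtain ⟨k, hk, hw⟩ := walk_to_center H G r Λ' h2 hsubr hup
        rw [hLm0] at hw
        have hkS : k ∈ {j : ℕ | ∃ Pa Q, HullOf σ π v Λ' Pa ∧
            HullOf σ π v (spanL v e₁ e₂) Q ∧ WalkN σ π v j Pa Q} :=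
          ⟨Λ', spanL v e₁ e₂, Or.inl ⟨h2, rfl⟩, Or.inl ⟨vertex2Λ, rfl⟩, hw⟩
        have hne : {j : ℕ | ∃ Pa Q, HullOf σ π v Λ' Pa ∧
            HullOf σ π v (spanL v e₁ e₂) Q ∧ WalkN σ π v j Pa Q}.Nonempty := ⟨k, hkS⟩
        refine ⟨2 * Nat.find hne, Or.inr ⟨hEq, Nat.find hne,
          ⟨Nat.find_spec hne, fun j hj => Nat.find_min' hne hj⟩, ?_⟩, ?_⟩
        · rw [if_neg (fun h0' => not_both H h0' h2), if_neg not0Λ]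
          push_cast; ring
        · have hle : Nat.find hne ≤ k := Nat.find_min' hne hkS
          omega
  · -- backward
    rintro ⟨m, hDT, hm⟩
    rcases hDT with ⟨hEq, -⟩ | ⟨hne, k, ⟨hkS, hkmin⟩, hmEq⟩
    · rw [hEq, ← hLm0]
      have hr0 : (0 : ℤ) ≤ (r : ℤ) := by omega
      have hmem := Lm_mono H G hr0
      rw [hLmr] at hmem
      exact ⟨hmem (gen_mem_spanL_left H b₁ b₂), hmem (gen_mem_spanL_right H b₁ b₂)⟩
    · obtain ⟨P, Q, hPhull, hQhull, hwalk⟩ := hkS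
      have hQ : Q = spanL v e₁ e₂ := by
        rcases hQhull with ⟨-, hQ⟩ | ⟨h0, -, -⟩
        · exact hQ
        · exact absurd h0 not0Λ
      rw [hQ] at hwalk
      have hkP : ∀ x ∈ spanL v e₁ e₂, (π ^ k) • x ∈ P :=
        walk_pow_sub H k P _ hwalk
      rcases hPhull with ⟨h2', hPeq⟩ | ⟨h0', hP2, hsubP⟩
      · have hm0' : ¬ IsVertex0 σ v Λ' := fun hh => not_both H hh h2'
        rw [if_neg hm0', if_neg not0Λ] at hmEq
        have hkr : (k : ℤ) ≤ (r : ℤ) := by omega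
        obtain ⟨hbp1, hbp2⟩ := hbP k P hkr hkP
        rw [hPeq] at hbp1 hbp2
        exact ⟨hbp1, hbp2⟩
      · rw [if_pos h0', if_neg not0Λ] at hmEq
        have hkr : ((k + 1 : ℕ) : ℤ) ≤ (r : ℤ) := by push_cast; omega
        have hstep : ∀ x ∈ spanL v e₁ e₂, (π ^ (k + 1)) • x ∈ Λ' := by
          intro x hx
          have h1 : (π ^ k) • x ∈ P := hkP x hx
          have h2'' : π • ((π ^ k) • x) ∈ dualL σ v P := by
            rw [hP2.2]
            exact ⟨_, h1, rfl⟩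
          have h3 : dualL σ v P ⊆ dualL σ v Λ' := dual_antitone hsubP
          have h4 := h3 h2''
          rw [h0'.2] at h4
          rw [pow_succ', mul_smul]
          exact h4
        exact hbP (k + 1) Λ' hkr hstep
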